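/- Let K ≥ 1 and K' ≥ 0, and let f = h + conj(g) be a sense-preserving (K,K')-elliptic harmonic mapping on the unit disk 𝔻 with f(0) = 0, λ_f(0) = 1, and λ_f(z) ≤ λ for all z ∈ 𝔻 (λ ≥ 1). Set C = Kλ + 2(K'−1)/(Kλ + √(K²λ² + 4K')), r₁ = 1/(1 + C), and σ₁ = 1 + C·ln(C·r₁). Then the image f(𝔻_{r₁}) contains the disk 𝔻_{σ₁} = {w : |w| < σ₁}. -/

import Mathlib

open Complex Metric ComplexConjugate Filter Topology

noncomputable def Complex.abs : AbsoluteValue ℂ ℝ := NormedField.toAbsoluteValue ℂ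

@[simp] lemma Complex.abs_apply (z : ℂ) : Complex.abs z = ‖z‖ := rfl

@[simp] lemma Complex.abs_ofReal (r : ℝ) : Complex.abs (r : ℂ) = |r| := by
  simp [Complex.norm_real]

@[simp] lemma Complex.abs_conj (z : ℂ) : Complex.abs (conj z) = Complex.abs z := Complex.norm_conj z

lemma Complex.sq_abs (z : ℂ) : Complex.abs z ^ 2 = Complex.normSq z := Complex.sq_norm z

lemma Complex.normSq_eq_abs (z : ℂ) : Complex.normSq z = Complex.abs z ^ 2 :=
  Complex.normSq_eq_norm_sq z

lemma Complex.abs_re_le_abs (z : ℂ) : |z.re| ≤ Complex.abs z := Complex.abs_re_le_norm z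

lemma Complex.re_le_abs (z : ℂ) : z.re ≤ Complex.abs z := Complex.re_le_norm z

lemma sp_core (p : ℂ → ℂ) (M : ℝ) (hp : DifferentiableOn ℂ p (ball 0 1))
    (hM : ∀ w ∈ ball (0:ℂ) 1, Complex.abs (p w) < M) (hp0 : 1 ≤ Complex.abs (p 0))
    {z : ℂ} (hz : z ∈ ball (0:ℂ) 1) :
    Complex.abs (p z - p 0) ≤ (M - 1/M) * Complex.abs z / (1 - Complex.abs z) := by
  have h0m : (0:ℂ) ∈ ball (0:ℂ) 1 := by simp
  have haM : Complex.abs (p 0) < M := hM 0 h0m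
  have hM1 : 1 < M := lt_of_le_of_lt hp0 haM
  have hM0 : 0 < M := by linarith
  set a : ℂ := p 0 with ha
  -- key quadratic identity
  have key : ∀ w : ℂ, (Complex.abs ((M:ℂ)^2 - conj a * w))^2 - M^2 * (Complex.abs (w - a))^2
      = (M^2 - (Complex.abs a)^2) * (M^2 - (Complex.abs w)^2) := by
    intro w
    have h1 : ((M:ℂ)^2 - conj a * w) * conj ((M:ℂ)^2 - conj a * w)
        - (M:ℂ)^2 * ((w - a) * conj (w - a))
        = ((M:ℂ)^2 - a * conj a) * ((M:ℂ)^2 - w * conj w) := by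
      simp only [map_sub, map_mul, map_pow, Complex.conj_ofReal, Complex.conj_conj]
      ring
    rw [Complex.mul_conj, Complex.mul_conj, Complex.mul_conj, Complex.mul_conj] at h1
    have h2 : Complex.normSq ((M:ℂ)^2 - conj a * w) - M^2 * Complex.normSq (w - a)
        = (M^2 - Complex.normSq a) * (M^2 - Complex.normSq w) := by exact_mod_cast h1
    simp only [Complex.sq_abs]
    exact h2
  have habsM2 : Complex.abs ((M:ℂ)^2) = M^2 := by
    rw [map_pow, Complex.abs_ofReal, abs_of_pos hM0]
  -- denominators don't vanish
  have hdenlt : ∀ w ∈ ball (0:ℂ) 1, Complex.abs (conj a * p w) < M^2 := by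
    intro w hw
    rw [map_mul, Complex.abs_conj]
    nlinarith [Complex.abs.nonneg (p w), Complex.abs.nonneg a, hM w hw]
  have hden : ∀ w ∈ ball (0:ℂ) 1, ((M:ℂ)^2 - conj a * p w) ≠ 0 := by
    intro w hw hcon
    have h1 : (M:ℂ)^2 = conj a * p w := by rwa [sub_eq_zero] at hcon
    have := hdenlt w hw
    rw [← h1, habsM2] at this
    linarith
  -- the auxiliary map q
  set q : ℂ → ℂ := fun w => (M:ℂ) * (p w - a) / ((M:ℂ)^2 - conj a * p w) with hq
  have hqd : DifferentiableOn ℂ q (ball 0 1) := by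
    apply DifferentiableOn.div
    · exact (differentiableOn_const _).mul (hp.sub (differentiableOn_const _))
    · exact (differentiableOn_const _).sub ((differentiableOn_const _).mul hp)
    · exact hden
  have hq0 : q 0 = 0 := by simp [hq, ha]
  -- |q| < 1 on the ball
  have hqlt : ∀ w ∈ ball (0:ℂ) 1, Complex.abs (q w) < 1 := by
    intro w hw
    have hkey := key (p w)
    have hd : 0 < Complex.abs ((M:ℂ)^2 - conj a * p w) := by
      simpa [Complex.abs.pos_iff] using hden w hw
    have hfac : 0 < (M^2 - (Complex.abs a)^2) * (M^2 - (Complex.abs (p w))^2) := by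
      have h1 : 0 < M^2 - (Complex.abs a)^2 := by nlinarith [Complex.abs.nonneg a]
      have h2 : 0 < M^2 - (Complex.abs (p w))^2 := by
        nlinarith [Complex.abs.nonneg (p w), hM w hw]
      exact mul_pos h1 h2
    rw [hq]
    simp only [map_div₀, map_mul, Complex.abs_ofReal, abs_of_pos hM0]
    rw [div_lt_one hd]
    have hlt : (M * Complex.abs (p w - a))^2 < (Complex.abs ((M:ℂ)^2 - conj a * p w))^2 := by
      nlinarith [hkey]
    exact lt_of_pow_lt_pow_left₀ 2 hd.le hlt
  -- Schwarz lemma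
  have hmaps : Set.MapsTo q (ball 0 1) (ball (q 0) 1) := by
    intro w hw
    rw [hq0]
    simpa [Complex.dist_eq] using hqlt w hw
  have hschwarz : Complex.abs (q z) ≤ Complex.abs z := by
    have := Complex.dist_le_div_mul_dist_of_mapsTo_ball hqd (hmaps.mono_right ball_subset_closedBall) hz
    simpa [hq0, Complex.dist_eq] using this
  -- unfold to the desired estimate
  have hdz : 0 < Complex.abs ((M:ℂ)^2 - conj a * p z) := by
    simpa [Complex.abs.pos_iff] using hden z hz
  have hstep : M * Complex.abs (p z - a)
      ≤ Complex.abs z * Complex.abs ((M:ℂ)^2 - conj a * p z) := by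
    have : Complex.abs (q z) = M * Complex.abs (p z - a) / Complex.abs ((M:ℂ)^2 - conj a * p z) := by
      rw [hq]; simp only [map_div₀, map_mul, Complex.abs_ofReal, abs_of_pos hM0]
    rw [this, div_le_iff₀ hdz] at hschwarz
    linarith [hschwarz]
  -- bound the numerator
  have hnum : Complex.abs ((M:ℂ)^2 - conj a * p z)
      ≤ (M^2 - (Complex.abs a)^2) + Complex.abs a * Complex.abs (p z - a) := by
    have hrw : (M:ℂ)^2 - conj a * p z = ((M:ℂ)^2 - conj a * a) - conj a * (p z - a) := by ring
    rw [hrw]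
    refine le_trans (Complex.abs.sub_le_add _ _) ?_
    have hca : conj a * a = ((Complex.abs a ^ 2 : ℝ) : ℂ) := by
      rw [mul_comm, Complex.mul_conj, Complex.sq_abs]
    have h1 : Complex.abs ((M:ℂ)^2 - conj a * a) = M^2 - (Complex.abs a)^2 := by
      rw [hca]
      have : ((M:ℂ)^2 - ((Complex.abs a ^ 2 : ℝ) : ℂ)) = (((M^2 - Complex.abs a ^ 2 : ℝ)) : ℂ) := by
        push_cast; ring
      rw [this, Complex.abs_ofReal, _root_.abs_of_nonneg (by nlinarith [Complex.abs.nonneg a])]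
    rw [h1, map_mul, Complex.abs_conj]
  -- final algebra
  set d := Complex.abs (p z - a) with hd2
  set r := Complex.abs z with hr2
  set A := Complex.abs a with hA2
  have hr0 : 0 ≤ r := Complex.abs.nonneg z
  have hr1 : r < 1 := by simpa [Complex.dist_eq, hr2] using hz
  have hd0 : 0 ≤ d := Complex.abs.nonneg _
  have hA1 : 1 ≤ A := hp0
  have hmain : M * d ≤ r * ((M^2 - A^2) + A * d) :=
    le_trans hstep (by
      have := hnum
      nlinarith [hr0])
  -- from this derive d * (1 - r) * M ≤ (M^2 - 1) * r
  have hfin : d * (1 - r) * M ≤ (M^2 - 1) * r := by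
    nlinarith [mul_nonneg (mul_nonneg hd0 hr0) (sub_nonneg.2 haM.le),
      mul_nonneg hr0 (sub_nonneg.2 hA1)]
  rw [le_div_iff₀ (by linarith : (0:ℝ) < 1 - r)]
  have hMM : (M - 1/M) * M = M^2 - 1 := by field_simp
  nlinarith [hfin, hM0]

lemma sp_limit (p : ℂ → ℂ) (T : ℝ) (hT : 1 ≤ T) (hp : DifferentiableOn ℂ p (ball 0 1))
    (hpT : ∀ w ∈ ball (0:ℂ) 1, Complex.abs (p w) ≤ T) (hp0 : 1 ≤ Complex.abs (p 0))
    {z : ℂ} (hz : z ∈ ball (0:ℂ) 1) :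
    Complex.abs (p z - p 0) ≤ (T - 1/T) * Complex.abs z / (1 - Complex.abs z) := by
  have hT0 : (0:ℝ) < T := by linarith
  set k : ℝ := Complex.abs z / (1 - Complex.abs z) with hk
  have hgen : ∀ ε : ℝ, 0 < ε →
      Complex.abs (p z - p 0) ≤ (T + ε - 1/(T + ε)) * k := by
    intro ε hε
    have := sp_core p (T + ε) hp (fun w hw => lt_of_le_of_lt (hpT w hw) (by linarith)) hp0 hz
    calc Complex.abs (p z - p 0)
        ≤ (T + ε - 1/(T + ε)) * Complex.abs z / (1 - Complex.abs z) := this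
      _ = (T + ε - 1/(T + ε)) * k := by rw [hk, mul_div_assoc]
  have hcont : Tendsto (fun ε : ℝ => (T + ε - 1/(T + ε)) * k) (𝓝[>] 0) (𝓝 ((T - 1/T) * k)) := by
    have : ContinuousAt (fun ε : ℝ => (T + ε - 1/(T + ε)) * k) 0 := by
      have h1 : ContinuousAt (fun ε : ℝ => T + ε) 0 := by fun_prop
      have h2 : ContinuousAt (fun ε : ℝ => 1/(T + ε)) 0 :=
        ContinuousAt.div continuousAt_const h1 (by simpa using hT0.ne')
      exact ((h1.sub h2).mul continuousAt_const)
    simpa using this.tendsto.mono_left nhdsWithin_le_nhds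
  rw [mul_div_assoc, ← hk]
  exact ge_of_tendsto hcont (eventually_nhdsWithin_of_forall (fun ε hε => hgen ε hε))

lemma Vest (h g : ℂ → ℂ) (T : ℝ) (hT : 1 ≤ T)
    (hh' : DifferentiableOn ℂ (deriv h) (ball 0 1))
    (hg' : DifferentiableOn ℂ (deriv g) (ball 0 1))
    (hbound : ∀ w ∈ ball (0:ℂ) 1, Complex.abs (deriv h w) + Complex.abs (deriv g w) ≤ T)
    (hnorm : Complex.abs (deriv h 0) - Complex.abs (deriv g 0) = 1)
    {z : ℂ} (hz : z ∈ ball (0:ℂ) 1) :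
    Complex.abs (deriv h z - deriv h 0) + Complex.abs (deriv g z - deriv g 0)
      ≤ (T - 1/T) * Complex.abs z / (1 - Complex.abs z) := by
  set A : ℂ := deriv h z - deriv h 0 with hA
  set B : ℂ := deriv g z - deriv g 0 with hB
  set c₁ : ℂ := if A = 0 then 1 else A / (Complex.abs A : ℂ) with hc₁
  set c₂ : ℂ := if B = 0 then 1 else conj B / (Complex.abs B : ℂ) with hc₂
  have hc₁abs : Complex.abs c₁ = 1 := by
    rw [hc₁]; split_ifs with h0
    · simp
    · rw [map_div₀, Complex.abs_ofReal, _root_.abs_of_nonneg (Complex.abs.nonneg A),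
        div_self (by simpa [Complex.abs.pos_iff] using (Complex.abs.pos h0).ne')]
  have hc₂abs : Complex.abs c₂ = 1 := by
    rw [hc₂]; split_ifs with h0
    · simp
    · rw [map_div₀, Complex.abs_conj, Complex.abs_ofReal,
        _root_.abs_of_nonneg (Complex.abs.nonneg B),
        div_self (by simpa [Complex.abs.pos_iff] using (Complex.abs.pos h0).ne')]
  set u : ℂ := c₁ * c₂ with hu
  have huabs : Complex.abs u = 1 := by rw [hu, map_mul, hc₁abs, hc₂abs, one_mul]
  have hc₂B : c₂ * B = ((Complex.abs B : ℝ) : ℂ) := by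
    rw [hc₂]; split_ifs with h0
    · simp [h0]
    · have hB0 : ((Complex.abs B : ℝ) : ℂ) ≠ 0 := by
        simpa using (Complex.abs.pos h0).ne'
      field_simp
      rw [mul_comm, Complex.mul_conj, Complex.normSq_eq_abs]
      push_cast
      ring
  have hABu : Complex.abs (A + u * B) = Complex.abs A + Complex.abs B := by
    have : A + u * B = A + c₁ * ((Complex.abs B : ℝ) : ℂ) := by
      rw [hu, mul_assoc, hc₂B]
    rw [this, hc₁]
    split_ifs with h0
    · simp [h0]
    · have hA0 : (Complex.abs A : ℝ) ≠ 0 := (Complex.abs.pos h0).ne'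
      have hA0c : ((Complex.abs A : ℝ) : ℂ) ≠ 0 := by
        simpa using (Complex.abs.pos h0).ne'
      have heq : A + A / (Complex.abs A : ℂ) * ((Complex.abs B : ℝ) : ℂ)
          = A * (((Complex.abs A + Complex.abs B) / Complex.abs A : ℝ) : ℂ) := by
        push_cast
        field_simp
      rw [heq, map_mul, Complex.abs_ofReal,
        _root_.abs_of_nonneg (by positivity : (0:ℝ) ≤ (Complex.abs A + Complex.abs B) / Complex.abs A),
        mul_div_cancel₀ _ hA0]
  set p : ℂ → ℂ := fun w => deriv h w + u * deriv g w with hp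
  have hpd : DifferentiableOn ℂ p (ball 0 1) := hh'.add ((differentiableOn_const _).mul hg')
  have hpT : ∀ w ∈ ball (0:ℂ) 1, Complex.abs (p w) ≤ T := by
    intro w hw
    calc Complex.abs (deriv h w + u * deriv g w)
        ≤ Complex.abs (deriv h w) + Complex.abs (u * deriv g w) := Complex.abs.add_le _ _
      _ = Complex.abs (deriv h w) + Complex.abs (deriv g w) := by rw [map_mul, huabs, one_mul]
      _ ≤ T := hbound w hw
  have hp0 : 1 ≤ Complex.abs (p 0) := by
    have he : deriv h 0 = p 0 - u * deriv g 0 := by rw [hp]; ring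
    have h1 : Complex.abs (deriv h 0) ≤ Complex.abs (p 0) + Complex.abs (deriv g 0) := by
      rw [he]
      calc Complex.abs (p 0 - u * deriv g 0)
          ≤ Complex.abs (p 0) + Complex.abs (u * deriv g 0) := Complex.abs.sub_le_add _ _
        _ = Complex.abs (p 0) + Complex.abs (deriv g 0) := by rw [map_mul, huabs, one_mul]
    linarith
  have := sp_limit p T hT hpd hpT hp0 hz
  have hpz : p z - p 0 = A + u * B := by rw [hp, hA, hB]; ring
  rw [hpz, hABu] at this
  exact this

set_option maxHeartbeats 1000000 in
/-- Landau-type theorem (covering part): under the hypotheses of the Landau-type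
theorem, `f(𝔻_{r₁})` contains the disk of radius `σ₁ = 1 + C·ln(C·r₁)`. -/
theorem landau_covering
    (K K' lam C r₁ σ₁ : ℝ) (hK : 1 ≤ K) (hK' : 0 ≤ K') (hlam1 : 1 ≤ lam)
    (h g : ℂ → ℂ) (f : ℂ → ℂ)
    (hf : ∀ z : ℂ, f z = h z + conj (g z))
    (hh : DifferentiableOn ℂ h (ball 0 1))
    (hg : DifferentiableOn ℂ g (ball 0 1))
    (hsense : ∀ z ∈ ball (0 : ℂ) 1,
      ‖deriv g z‖ < ‖deriv h z‖)
    (hell : ∀ z ∈ ball (0 : ℂ) 1,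
      (‖deriv h z‖ + ‖deriv g z‖) ^ 2 ≤
        K * (‖deriv h z‖ ^ 2 - ‖deriv g z‖ ^ 2) + K')
    (hf0 : f 0 = 0)
    (hlam0 : |‖deriv h 0‖ - ‖deriv g 0‖| = 1)
    (hlam : ∀ z ∈ ball (0 : ℂ) 1,
      |‖deriv h z‖ - ‖deriv g z‖| ≤ lam)
    (hC : C = K * lam + 2 * (K' - 1) /
      (K * lam + Real.sqrt (K ^ 2 * lam ^ 2 + 4 * K')))
    (hr : r₁ = 1 / (1 + C))
    (hσ : σ₁ = 1 + C * Real.log (C * r₁)) :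
    ball (0 : ℂ) σ₁ ⊆ f '' ball (0 : ℂ) r₁ := by
  simp only [← Complex.abs_apply] at hsense hell hlam0 hlam
  -- Step 0: basic constants
  have hKlam : 1 ≤ K * lam := by nlinarith
  set s : ℝ := Real.sqrt (K ^ 2 * lam ^ 2 + 4 * K') with hs_def
  have hs_sq : s ^ 2 = K ^ 2 * lam ^ 2 + 4 * K' := Real.sq_sqrt (by positivity)
  have hs_ge : K * lam ≤ s := by
    rw [hs_def]
    calc K * lam = Real.sqrt ((K * lam) ^ 2) := (Real.sqrt_sq (by linarith)).symm
      _ ≤ Real.sqrt (K ^ 2 * lam ^ 2 + 4 * K') := Real.sqrt_le_sqrt (by nlinarith)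
  set T : ℝ := (K * lam + s) / 2 with hT_def
  have hT1 : 1 ≤ T := by rw [hT_def]; linarith
  have hT0 : 0 < T := by linarith
  have hTq : T ^ 2 = K * lam * T + K' := by rw [hT_def]; nlinarith [hs_sq]
  have h2T : K * lam + s = 2 * T := by rw [hT_def]; ring
  have hCT : C = T - 1 / T := by
    rw [hC, h2T]
    field_simp
    nlinarith [hTq]
  have hC0 : 0 ≤ C := by
    rw [hCT]
    have : 1 / T ≤ 1 := by rw [div_le_one hT0]; exact hT1
    linarith
  have h1C : 1 ≤ 1 + C := by linarith
  have hr1pos : 0 < r₁ := by rw [hr]; positivity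
  have hr1le : r₁ ≤ 1 := by rw [hr, div_le_one (by linarith)]; linarith
  -- normalization at 0
  have h0m : (0:ℂ) ∈ ball (0:ℂ) 1 := by simp
  have hone : Complex.abs (deriv h 0) - Complex.abs (deriv g 0) = 1 := by
    have hpos : 0 < Complex.abs (deriv h 0) - Complex.abs (deriv g 0) :=
      sub_pos.2 (hsense 0 h0m)
    rwa [_root_.abs_of_pos hpos] at hlam0
  -- Λ ≤ T
  have hLam : ∀ w ∈ ball (0:ℂ) 1,
      Complex.abs (deriv h w) + Complex.abs (deriv g w) ≤ T := by
    intro w hw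
    set a := Complex.abs (deriv h w)
    set b := Complex.abs (deriv g w)
    have hba : b < a := hsense w hw
    have hab : a - b ≤ lam := by
      have h1 := hlam w hw
      have h2 : |a - b| = a - b := _root_.abs_of_pos (sub_pos.2 hba)
      rw [h2] at h1
      exact h1
    have h2 : (a + b) ^ 2 ≤ K * (a ^ 2 - b ^ 2) + K' := hell w hw
    have hb0 : 0 ≤ b := Complex.abs.nonneg _
    have h3 : (a + b) ^ 2 ≤ K * lam * (a + b) + K' := by
      nlinarith [mul_nonneg (by linarith : (0:ℝ) ≤ K)
        (mul_nonneg (by linarith : (0:ℝ) ≤ a + b) (sub_nonneg.2 hab))]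
    by_contra hcon
    push_neg at hcon
    have hfac : 0 < (a + b - T) * ((a + b) + T - K * lam) := by
      apply mul_pos (by linarith)
      have : K * lam ≤ 2 * T := by linarith
      linarith
    have hexp : (a + b - T) * ((a + b) + T - K * lam)
        = ((a + b) ^ 2 - K * lam * (a + b) - K') + (K * lam * T + K' - T ^ 2) := by ring
    linarith [hfac, h3, hTq, hexp]
  -- derivatives are analytic
  have hh' : DifferentiableOn ℂ (deriv h) (ball 0 1) :=
    ((hh.analyticOnNhd isOpen_ball).deriv).differentiableOn
  have hg' : DifferentiableOn ℂ (deriv g) (ball 0 1) :=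
    ((hg.analyticOnNhd isOpen_ball).deriv).differentiableOn
  -- variation estimate
  have hV : ∀ z ∈ ball (0:ℂ) 1,
      Complex.abs (deriv h z - deriv h 0) + Complex.abs (deriv g z - deriv g 0)
        ≤ C * Complex.abs z / (1 - Complex.abs z) := by
    intro z hz
    have := Vest h g T hT1 hh' hg' hLam hone hz
    rwa [← hCT] at this
  -- continuity of f on ball 0 1
  have hfc : ContinuousOn f (ball 0 1) := by
    have : ContinuousOn (fun z => h z + conj (g z)) (ball 0 1) :=
      hh.continuousOn.add (Complex.conjCLE.continuous.comp_continuousOn hg.continuousOn)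
    exact this.congr (fun z _ => hf z)
  -- main covering argument
  intro w hw
  have hwabs : Complex.abs w < σ₁ := by simpa [Complex.dist_eq] using hw
  have hw0 : 0 ≤ Complex.abs w := Complex.abs.nonneg w
  -- choose the radius r
  obtain ⟨r, hr0, hrr1, hrs⟩ : ∃ r : ℝ, 0 < r ∧ r < r₁ ∧
      Complex.abs w < (1 + C) * r + C * Real.log (1 - r) := by
    rcases eq_or_lt_of_le hC0 with hCz | hCpos
    · -- C = 0
      have hC0' : C = 0 := hCz.symm
      have hr1 : r₁ = 1 := by rw [hr, hC0']; norm_num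
      have hσ1 : σ₁ = 1 := by rw [hσ, hC0']; ring
      refine ⟨(Complex.abs w + 1) / 2, by linarith, by rw [hr1]; linarith [hwabs, hσ1 ▸ hwabs], ?_⟩
      rw [hC0']
      have : Complex.abs w < 1 := by rw [← hσ1]; exact hwabs
      linarith
    · -- C > 0
      have h1r1 : 1 - r₁ = C * r₁ := by
        rw [hr]; field_simp; ring
      have h1r1pos : 0 < 1 - r₁ := by rw [h1r1]; positivity
      have hr1eq : (1 + C) * r₁ = 1 := by
        rw [hr]; field_simp
      have hσr1 : (1 + C) * r₁ + C * Real.log (1 - r₁) = σ₁ := by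
        rw [hσ, hr1eq, h1r1]
      have hcont : ContinuousAt (fun t : ℝ => (1 + C) * t + C * Real.log (1 - t)) r₁ := by
        have h1 : ContinuousAt (fun t : ℝ => 1 - t) r₁ := by fun_prop
        have h2 : ContinuousAt Real.log (1 - r₁) := Real.continuousAt_log h1r1pos.ne'
        exact (continuousAt_const.mul continuousAt_id).add
          (continuousAt_const.mul (h2.comp h1))
      have htend : Filter.Tendsto (fun t : ℝ => (1 + C) * t + C * Real.log (1 - t))
          (nhdsWithin r₁ (Set.Iio r₁)) (nhds σ₁) := by
        rw [← hσr1]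
        exact hcont.continuousWithinAt.tendsto
      have hev1 : ∀ᶠ t in nhdsWithin r₁ (Set.Iio r₁),
          Complex.abs w < (1 + C) * t + C * Real.log (1 - t) :=
        htend.eventually (eventually_gt_nhds hwabs)
      have hev2 : ∀ᶠ t in nhdsWithin r₁ (Set.Iio r₁), 0 < t :=
        Filter.Eventually.filter_mono nhdsWithin_le_nhds (eventually_gt_nhds hr1pos)
      have hev3 : ∀ᶠ t in nhdsWithin r₁ (Set.Iio r₁), t < r₁ :=
        eventually_mem_nhdsWithin
      obtain ⟨t, h1, h2, h3⟩ := (hev1.and (hev2.and hev3)).exists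
      exact ⟨t, h2, h3, h1⟩
  have hrlt1 : r < 1 := lt_of_lt_of_le hrr1 hr1le
  set sr : ℝ := (1 + C) * r + C * Real.log (1 - r) with hsr_def
  have hsr0 : 0 < sr := lt_of_le_of_lt hw0 hrs
  -- boundary lower bound
  have hbdry : ∀ z ∈ sphere (0:ℂ) r, sr ≤ Complex.abs (f z) := by
    intro z hzs
    have hzr : Complex.abs z = r := by simpa [Complex.dist_eq] using hzs
    have hz0 : z ≠ 0 := by
      intro hz0; rw [hz0] at hzr; simp at hzr; linarith
    have hg00 : 0 ≤ Complex.abs (deriv g 0) := Complex.abs.nonneg _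
    have hh'0 : deriv h 0 ≠ 0 := by
      intro h0
      rw [h0] at hone; simp at hone; linarith [norm_nonneg (deriv g 0)]
    set v : ℂ := deriv h 0 * z with hv
    have hv0 : v ≠ 0 := mul_ne_zero hh'0 hz0
    have hvpos : 0 < Complex.abs v := Complex.abs.pos hv0
    set e : ℂ := v / (Complex.abs v : ℂ) with he
    have heabs : Complex.abs e = 1 := by
      rw [he, map_div₀, Complex.abs_ofReal, _root_.abs_of_nonneg (Complex.abs.nonneg v),
        div_self hvpos.ne']
    have hev : (Complex.abs v : ℂ) * e = v := by
      rw [he, mul_div_cancel₀]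
      simpa using hvpos.ne'
    have hee : ((starRingEnd ℂ) e) * e = 1 := by
      have h1 : e * (starRingEnd ℂ) e = ((Complex.normSq e : ℝ) : ℂ) := Complex.mul_conj e
      have h2 : Complex.normSq e = 1 := by
        rw [Complex.normSq_eq_abs, heabs]; norm_num
      rw [mul_comm] at h1
      rw [h1, h2]; norm_num
    -- membership of path points
    have hmem : ∀ t : ℝ, t ∈ Set.Icc (0:ℝ) 1 → ((t:ℂ) * z) ∈ ball (0:ℂ) 1 := by
      intro t ht
      have : Complex.abs ((t:ℂ) * z) = t * r := by
        rw [map_mul, Complex.abs_ofReal, _root_.abs_of_nonneg ht.1, hzr]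
      rw [mem_ball, Complex.dist_eq, sub_zero, ← Complex.abs_apply, this]
      nlinarith [ht.2]
    -- the comparison function and its derivative
    set F : ℝ → ℝ := fun t => ((starRingEnd ℂ) e * h ((t:ℂ) * z)).re + (e * g ((t:ℂ) * z)).re
      - ((1 + C) * r * t + C * Real.log (1 - t * r)) with hF
    set D : ℝ → ℝ := fun t => ((starRingEnd ℂ) e * (deriv h ((t:ℂ) * z) * z)).re
      + (e * (deriv g ((t:ℂ) * z) * z)).re - ((1 + C) * r + C * ((1 - t * r)⁻¹ * (-r))) with hD
    have hasF : ∀ t : ℝ, t ∈ Set.Icc (0:ℝ) 1 → HasDerivAt F (D t) t := by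
      intro t ht
      have hmemt : ((t:ℂ) * z) ∈ ball (0:ℂ) 1 := hmem t ht
      have h1tr : 0 < 1 - t * r := by
        have : Complex.abs ((t:ℂ) * z) < 1 := by
          simpa [Complex.dist_eq] using hmemt
        rw [map_mul, Complex.abs_ofReal, _root_.abs_of_nonneg ht.1, hzr] at this
        linarith
      -- complex derivative of ζ ↦ conj e * h (ζ * z)
      have hdh : DifferentiableAt ℂ h ((t:ℂ) * z) :=
        hh.differentiableAt (isOpen_ball.mem_nhds hmemt)
      have hdg : DifferentiableAt ℂ g ((t:ℂ) * z) :=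
        hg.differentiableAt (isOpen_ball.mem_nhds hmemt)
      have hmul : HasDerivAt (fun ζ : ℂ => ζ * z) z ((t:ℂ)) := hasDerivAt_mul_const z
      have hch : HasDerivAt (fun ζ : ℂ => h (ζ * z)) (deriv h ((t:ℂ) * z) * z) (t:ℂ) :=
        (hdh.hasDerivAt.comp (t:ℂ) hmul)
      have hcg : HasDerivAt (fun ζ : ℂ => g (ζ * z)) (deriv g ((t:ℂ) * z) * z) (t:ℂ) :=
        (hdg.hasDerivAt.comp (t:ℂ) hmul)
      have hch2 : HasDerivAt (fun ζ : ℂ => (starRingEnd ℂ) e * h (ζ * z))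
          ((starRingEnd ℂ) e * (deriv h ((t:ℂ) * z) * z)) (t:ℂ) := hch.const_mul _
      have hcg2 : HasDerivAt (fun ζ : ℂ => e * g (ζ * z))
          (e * (deriv g ((t:ℂ) * z) * z)) (t:ℂ) := hcg.const_mul _
      have hre1 : HasDerivAt (fun t : ℝ => ((starRingEnd ℂ) e * h ((t:ℂ) * z)).re)
          ((starRingEnd ℂ) e * (deriv h ((t:ℂ) * z) * z)).re t := hch2.real_of_complex
      have hre2 : HasDerivAt (fun t : ℝ => (e * g ((t:ℂ) * z)).re)
          (e * (deriv g ((t:ℂ) * z) * z)).re t := hcg2.real_of_complex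
      -- derivative of the penalty
      have hlin : HasDerivAt (fun t : ℝ => (1 + C) * r * t) ((1 + C) * r) t := by
        simpa using (hasDerivAt_id t).const_mul ((1 + C) * r)
      have hinner : HasDerivAt (fun t : ℝ => 1 - t * r) (-r) t := by
        simpa using (hasDerivAt_mul_const r).const_sub 1
      have hlog : HasDerivAt (fun t : ℝ => Real.log (1 - t * r)) ((1 - t * r)⁻¹ * (-r)) t :=
        by have := (Real.hasDerivAt_log h1tr.ne').comp t hinner; exact this
      have hpen : HasDerivAt (fun t : ℝ => (1 + C) * r * t + C * Real.log (1 - t * r))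
          ((1 + C) * r + C * ((1 - t * r)⁻¹ * (-r))) t := hlin.add (hlog.const_mul C)
      exact (hre1.add hre2).sub hpen
    -- the derivative is nonnegative on [0,1]
    have hDpos : ∀ t : ℝ, t ∈ Set.Icc (0:ℝ) 1 → 0 ≤ D t := by
      intro t ht
      have hmemt : ((t:ℂ) * z) ∈ ball (0:ℂ) 1 := hmem t ht
      have habs_t : Complex.abs ((t:ℂ) * z) = t * r := by
        rw [map_mul, Complex.abs_ofReal, _root_.abs_of_nonneg ht.1, hzr]
      have h1tr : 0 < 1 - t * r := by
        have : Complex.abs ((t:ℂ) * z) < 1 := by simpa [Complex.dist_eq] using hmemt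
        rw [habs_t] at this; linarith
      have hVt := hV ((t:ℂ) * z) hmemt
      rw [habs_t] at hVt
      set Ah := Complex.abs (deriv h ((t:ℂ) * z) - deriv h 0) with hAh
      set Ag := Complex.abs (deriv g ((t:ℂ) * z) - deriv g 0) with hAg
      -- first term bound
      have h1 : (starRingEnd ℂ) e * (deriv h 0 * z) = (Complex.abs v : ℂ) := by
        rw [← hv]
        conv_lhs => rw [← hev]
        rw [show (starRingEnd ℂ) e * ((Complex.abs v : ℂ) * e)
          = (Complex.abs v : ℂ) * ((starRingEnd ℂ) e * e) by ring, hee, mul_one]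
      have hsplit : (starRingEnd ℂ) e * (deriv h ((t:ℂ) * z) * z)
          = (Complex.abs v : ℂ) + (starRingEnd ℂ) e * ((deriv h ((t:ℂ) * z) - deriv h 0) * z) := by
        rw [← h1]; ring
      have hb1 : (Complex.abs v) - Ah * r ≤ ((starRingEnd ℂ) e * (deriv h ((t:ℂ) * z) * z)).re := by
        rw [hsplit, Complex.add_re, Complex.ofReal_re]
        have habs2 : Complex.abs ((starRingEnd ℂ) e * ((deriv h ((t:ℂ) * z) - deriv h 0) * z))
            = Ah * r := by
          rw [map_mul, map_mul, Complex.abs_conj, heabs, one_mul, hzr, hAh]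
        have := Complex.abs_re_le_abs ((starRingEnd ℂ) e * ((deriv h ((t:ℂ) * z) - deriv h 0) * z))
        rw [habs2] at this
        have := neg_le_of_abs_le this
        linarith
      have hb2 : -((Complex.abs (deriv g 0) + Ag) * r) ≤ (e * (deriv g ((t:ℂ) * z) * z)).re := by
        have habs3 : Complex.abs (e * (deriv g ((t:ℂ) * z) * z))
            ≤ (Complex.abs (deriv g 0) + Ag) * r := by
          rw [map_mul, map_mul, heabs, one_mul, hzr]
          have : Complex.abs (deriv g ((t:ℂ) * z)) ≤ Complex.abs (deriv g 0) + Ag := by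
            have h4 : deriv g ((t:ℂ) * z) = deriv g 0 + (deriv g ((t:ℂ) * z) - deriv g 0) := by
              ring
            rw [h4]
            exact (Complex.abs.add_le _ _).trans (by rw [hAg])
          exact mul_le_mul_of_nonneg_right this hr0.le
        have := Complex.abs_re_le_abs (e * (deriv g ((t:ℂ) * z) * z))
        have := neg_le_of_abs_le this
        linarith
      have hvr : Complex.abs v = Complex.abs (deriv h 0) * r := by rw [hv, map_mul, hzr]
      have hident : (1 + C) * r + C * ((1 - t * r)⁻¹ * (-r))
          = r - C * t * r^2 * (1 - t * r)⁻¹ := by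
        have hne : 1 - t * r ≠ 0 := h1tr.ne'
        have hinv : (1 - t * r) * (1 - t * r)⁻¹ = 1 := mul_inv_cancel₀ hne
        linear_combination (-(C * r)) * hinv
      have hxr : (Ah + Ag) * r ≤ C * (t * r) / (1 - t * r) * r :=
        mul_le_mul_of_nonneg_right hVt hr0.le
      have heq2 : C * (t * r) / (1 - t * r) * r = C * t * r^2 * (1 - t * r)⁻¹ := by ring
      rw [heq2] at hxr
      simp only [hD]
      rw [hident]
      rw [hvr] at hb1
      rw [add_mul] at hb2 hxr
      have honer : Complex.abs (deriv h 0) * r - Complex.abs (deriv g 0) * r = r := by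
        rw [← sub_mul, hone, one_mul]
      linarith [hb1, hb2, hxr, honer]
    -- monotonicity and conclusion
    have hmono : MonotoneOn F (Set.Icc (0:ℝ) 1) := by
      apply monotoneOn_of_deriv_nonneg (convex_Icc 0 1)
      · intro t ht
        exact (hasF t ht).continuousAt.continuousWithinAt
      · intro t ht
        rw [interior_Icc] at ht
        exact ((hasF t (Set.mem_Icc_of_Ioo ht)).differentiableAt).differentiableWithinAt
      · intro t ht
        rw [interior_Icc] at ht
        rw [(hasF t (Set.mem_Icc_of_Ioo ht)).deriv]
        exact hDpos t (Set.mem_Icc_of_Ioo ht)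
    have hF01 : F 0 ≤ F 1 :=
      hmono (Set.left_mem_Icc.2 zero_le_one) (Set.right_mem_Icc.2 zero_le_one) zero_le_one
    have hF0 : F 0 = 0 := by
      have hfz0 : h 0 + (starRingEnd ℂ) (g 0) = 0 := by rw [← hf 0]; exact hf0
      have hh0 : h 0 = -(starRingEnd ℂ) (g 0) := eq_neg_of_add_eq_zero_left hfz0
      simp only [hF]
      norm_num
      rw [hh0]
      simp [Complex.neg_re, Complex.neg_im, Complex.conj_re, Complex.conj_im]
    have hF1 : F 1 = ((starRingEnd ℂ) e * f z).re - sr := by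
      simp only [hF]
      norm_num
      rw [hf z]
      simp [Complex.add_re, Complex.add_im, Complex.conj_re, Complex.conj_im]
      ring
    have hre : sr ≤ ((starRingEnd ℂ) e * f z).re := by
      rw [hF1] at hF01; rw [hF0] at hF01; linarith
    calc sr ≤ ((starRingEnd ℂ) e * f z).re := hre
      _ ≤ Complex.abs ((starRingEnd ℂ) e * f z) := Complex.re_le_abs _
      _ = Complex.abs (f z) := by rw [map_mul, Complex.abs_conj, heabs, one_mul]
  -- openness of the image
  have hopen : IsOpen (f '' ball 0 r) := by
    rw [isOpen_iff_mem_nhds]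
    rintro y ⟨x, hx, rfl⟩
    have hx1 : x ∈ ball (0:ℂ) 1 := ball_subset_ball hrlt1.le hx
    have hdh : DifferentiableAt ℂ h x := hh.differentiableAt (isOpen_ball.mem_nhds hx1)
    have hdg : DifferentiableAt ℂ g x := hg.differentiableAt (isOpen_ball.mem_nhds hx1)
    set Lh : ℂ →L[ℝ] ℂ :=
      (ContinuousLinearMap.smulRight (1 : ℂ →L[ℂ] ℂ) (deriv h x)).restrictScalars ℝ with hLh
    set Lg0 : ℂ →L[ℝ] ℂ :=
      (ContinuousLinearMap.smulRight (1 : ℂ →L[ℂ] ℂ) (deriv g x)).restrictScalars ℝ with hLg0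
    set Lg : ℂ →L[ℝ] ℂ :=
      ((Complex.conjCLE : ℂ ≃L[ℝ] ℂ) : ℂ →L[ℝ] ℂ).comp Lg0 with hLg
    set L : ℂ →L[ℝ] ℂ := Lh + Lg with hL
    have hLapp : ∀ v : ℂ, L v = v * deriv h x + (starRingEnd ℂ) (v * deriv g x) := by
      intro v
      simp [hL, hLh, hLg, hLg0, ContinuousLinearMap.smulRight_apply, smul_eq_mul]
    have hfe : f = fun y => h y + (starRingEnd ℂ) (g y) := funext hf
    have hfd : HasFDerivAt f L x := by
      have h1 : HasFDerivAt h Lh x := (hdh.hasDerivAt.hasFDerivAt).restrictScalars ℝ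
      have h2 : HasFDerivAt g Lg0 x := (hdg.hasDerivAt.hasFDerivAt).restrictScalars ℝ
      have h3 : HasFDerivAt (fun y => (starRingEnd ℂ) (g y)) Lg x := by
        exact (Complex.conjCLE.toContinuousLinearMap.hasFDerivAt).comp x h2
      rw [hfe]
      exact h1.add h3
    have hinj : Function.Injective L := by
      intro v₁ v₂ hv
      by_contra hne
      have hv0 : v₁ - v₂ ≠ 0 := sub_ne_zero.2 hne
      have hL0 : L (v₁ - v₂) = 0 := by rw [map_sub, hv, sub_self]
      rw [hLapp (v₁ - v₂)] at hL0
      have heq : (v₁ - v₂) * deriv h x = -(starRingEnd ℂ) ((v₁ - v₂) * deriv g x) :=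
        eq_neg_of_add_eq_zero_left hL0
      have habs : Complex.abs (v₁ - v₂) * Complex.abs (deriv h x)
          = Complex.abs (v₁ - v₂) * Complex.abs (deriv g x) := by
        rw [← map_mul]
        calc Complex.abs ((v₁ - v₂) * deriv h x)
            = Complex.abs (-(starRingEnd ℂ) ((v₁ - v₂) * deriv g x)) := by rw [heq]
          _ = Complex.abs ((starRingEnd ℂ) ((v₁ - v₂) * deriv g x)) := Complex.abs.map_neg _
          _ = Complex.abs ((v₁ - v₂) * deriv g x) := Complex.abs_conj _
          _ = Complex.abs (v₁ - v₂) * Complex.abs (deriv g x) := map_mul _ _ _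
      have hvpos : 0 < Complex.abs (v₁ - v₂) := Complex.abs.pos hv0
      have := hsense x hx1
      nlinarith
    have hbij : Function.Bijective L :=
      ⟨hinj, LinearMap.injective_iff_surjective.1 hinj⟩
    set eL : ℂ ≃L[ℝ] ℂ :=
      LinearEquiv.toContinuousLinearEquiv (LinearEquiv.ofBijective (L : ℂ →ₗ[ℝ] ℂ) hbij) with heL
    have hcoe : (eL : ℂ →L[ℝ] ℂ) = L := by
      ext v
      simp [heL]
    have hca : ContDiffAt ℝ 1 f x := by
      have h1' : ContDiffAt ℝ 1 h x :=
        ((hh.analyticOnNhd isOpen_ball x hx1).contDiffAt).restrict_scalars ℝ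
      have h2' : ContDiffAt ℝ 1 g x :=
        ((hg.analyticOnNhd isOpen_ball x hx1).contDiffAt).restrict_scalars ℝ
      have h3 : ContDiffAt ℝ 1 (fun y => (starRingEnd ℂ) (g y)) x :=
        (Complex.conjCLE.toContinuousLinearMap.contDiff.contDiffAt).comp x h2'
      rw [hfe]
      exact h1'.add h3
    have hstrict : HasStrictFDerivAt f ((eL : ℂ ≃L[ℝ] ℂ) : ℂ →L[ℝ] ℂ) x := by
      rw [hcoe]
      exact hca.hasStrictFDerivAt' hfd one_ne_zero
    have hmap : Filter.map f (nhds x) = nhds (f x) := hstrict.map_nhds_eq_of_equiv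
    rw [← hmap]
    exact Filter.image_mem_map (isOpen_ball.mem_nhds hx)
  -- compactness
  have hsub1 : closedBall (0:ℂ) r ⊆ ball 0 1 := closedBall_subset_ball hrlt1
  have hcomp : IsCompact (f '' closedBall 0 r) :=
    (isCompact_closedBall 0 r).image_of_continuousOn (hfc.mono hsub1)
  -- connectedness argument
  set U := f '' ball 0 r with hU_def
  have hclosure : closure U ⊆ f '' closedBall 0 r :=
    closure_minimal (Set.image_mono ball_subset_closedBall) hcomp.isClosed
  have hSU : ball (0:ℂ) sr ∩ closure U ⊆ U := by
    intro x ⟨hxS, hxC⟩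
    obtain ⟨y, hy, hxy⟩ := hclosure hxC
    rcases lt_or_eq_of_le (mem_closedBall_iff_norm.1 hy) with hlt | heq
    · exact ⟨y, by simpa [mem_ball_iff_norm] using hlt, hxy⟩
    · exfalso
      have hyS : y ∈ sphere (0:ℂ) r := by simpa [mem_sphere_iff_norm] using heq
      have := hbdry y hyS
      rw [hxy] at this
      have hxlt : Complex.abs x < sr := by simpa [Complex.dist_eq] using hxS
      linarith
  have hwU : w ∈ U := by
    have hpre : IsPreconnected (ball (0:ℂ) sr) := (convex_ball _ _).isPreconnected
    have hsub : ball (0:ℂ) sr ⊆ U ∪ (closure U)ᶜ := by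
      intro x hx
      by_cases hxC : x ∈ closure U
      · exact Or.inl (hSU ⟨hx, hxC⟩)
      · exact Or.inr hxC
    have hdisj : Disjoint U (closure U)ᶜ :=
      (disjoint_compl_right).mono_left subset_closure
    have h0S : (0:ℂ) ∈ ball (0:ℂ) sr := by simpa using hsr0
    have h0U : (0:ℂ) ∈ U := ⟨0, by simpa using hr0, hf0⟩
    have := hpre.subset_left_of_subset_union hopen (isClosed_closure.isOpen_compl)
      hdisj hsub ⟨0, h0S, h0U⟩
    exact this (by simpa [Complex.dist_eq] using hrs)
  obtain ⟨y, hy, hyw⟩ := hwU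
  exact ⟨y, ball_subset_ball hrr1.le hy, hyw⟩
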